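/- Let Ω be a nonempty set, 𝒜 a field of sets on Ω, and P a full conditional probability on 𝒜. Let ⟨𝒜⟩* be the field of all unions of 𝒜-atoms, where the 𝒜-atoms are the equivalence classes of the relation 'x ~ y iff x and y belong to exactly the same members of 𝒜' (so 𝒜 ⊆ ⟨𝒜⟩*). Let 𝒫 be the set of conditional probabilities P̃ on ⟨𝒜⟩* × 𝒜⁰ (maps satisfying (C1), (C2) with P̃(·|H) a finitely additive probability on ⟨𝒜⟩*, and (C3) for events in ⟨𝒜⟩* and conditioning events in 𝒜⁰) extending P. Then 𝒫 is nonempty and, for every K ∈ 𝒜⁰ and every F ∈ ⟨𝒜⟩*, inf{P̃(F|K) : P̃ ∈ 𝒫} = sup{P(B|K) : B ∈ 𝒜, B ⊆ F}; in particular, for each K ∈ 𝒜⁰ the map F ↦ inf{P̃(F|K) : P̃ ∈ 𝒫} is the inner measure induced by P(·|K) and is a totally monotone capacity on ⟨𝒜⟩*. -/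

import Mathlib

/-!
Every extension `Q` is a finitely additive probability on `⟨𝒜⟩*` agreeing with `P` on `𝒜`, so
`Q(F|K) ≥ P(B|K)` whenever `B ∈ 𝒜` and `B ⊆ F`: the lower envelope dominates the inner measure
`P_*(F|K)`. Conversely, the Łoś–Marczewski formula
`Q(E|K) = P_*(E ∩ K ∩ F|K) + P^*(E ∩ K \ F|K)` adjoins `F` to `𝒜`, keeping (C1)–(C3) for
conditioning events in `𝒜⁰` and giving `Q(F|K) = P_*(F|K)`. Iterating the same one-step
extension, Zorn's lemma extends this to a conditional probability on all subsets of `Ω`, which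
restricts to a member of `𝒫`. Finally, an inner measure is totally monotone: approximate the
finitely many sets `⋂ i ∈ s, A i` from inside simultaneously by `⋂ i ∈ s, E i` with `E i ∈ 𝒜`,
and apply inclusion–exclusion to the `E i`.
-/

open Set

open scoped Classical

variable {Ω : Type*}

/-- A field of sets on `Ω`: contains `univ`, closed under complements and finite unions. -/
def IsSetField (𝒜 : Set (Set Ω)) : Prop :=
  Set.univ ∈ 𝒜 ∧ (∀ A ∈ 𝒜, Aᶜ ∈ 𝒜) ∧ ∀ A ∈ 𝒜, ∀ B ∈ 𝒜, A ∪ B ∈ 𝒜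

/-- A finitely additive probability on the field `𝒜`. -/
def IsFAP (𝒜 : Set (Set Ω)) (P : Set Ω → ℝ) : Prop :=
  (∀ A ∈ 𝒜, 0 ≤ P A ∧ P A ≤ 1) ∧ P Set.univ = 1 ∧
    ∀ A ∈ 𝒜, ∀ B ∈ 𝒜, Disjoint A B → P (A ∪ B) = P A + P B

/-- A partition of `Ω` into nonempty pairwise disjoint pieces. -/
def IsPartition {ι : Type*} (H : ι → Set Ω) : Prop :=
  (∀ i, (H i).Nonempty) ∧ (Pairwise fun i j => Disjoint (H i) (H j)) ∧
    (⋃ i, H i) = Set.univ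

/-- A field containing every member of the partition `H` and whose members are
unions of members of the partition. -/
def IsFieldOver {ι : Type*} (H : ι → Set Ω) (𝒜L : Set (Set Ω)) : Prop :=
  IsSetField 𝒜L ∧ (∀ i, H i ∈ 𝒜L) ∧ ∀ A ∈ 𝒜L, ∃ S : Set ι, A = ⋃ i ∈ S, H i

/-- A field containing `𝒜L ∪ 𝒜E` whose members are unions of the atoms `H i ∩ E j`. -/
def IsJointField {ι κ : Type*} (H : ι → Set Ω) (E : κ → Set Ω)
    (𝒜L 𝒜E 𝒜 : Set (Set Ω)) : Prop :=
  IsSetField 𝒜 ∧ 𝒜L ⊆ 𝒜 ∧ 𝒜E ⊆ 𝒜 ∧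
    ∀ A ∈ 𝒜, ∃ S : Set (ι × κ), A = ⋃ p ∈ S, H p.1 ∩ E p.2

/-- A strategy on `𝒜 × ℒ`: each `σ (·|H i)` is a finitely additive probability on `𝒜`
equal to `1` on events implied by `H i`. -/
def IsStrategy {ι : Type*} (𝒜 : Set (Set Ω)) (H : ι → Set Ω) (σ : Set Ω → ι → ℝ) : Prop :=
  ∀ i, IsFAP 𝒜 (fun F => σ F i) ∧ ∀ F ∈ 𝒜, H i ⊆ F → σ F i = 1

/-- A full conditional probability on the field `𝒜` (conditions (C1), (C2), (C3)). -/
def IsFCP (𝒜 : Set (Set Ω)) (P : Set Ω → Set Ω → ℝ) : Prop :=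
  (∀ E ∈ 𝒜, ∀ K ∈ 𝒜, K.Nonempty → P E K = P (E ∩ K) K) ∧
  (∀ K ∈ 𝒜, K.Nonempty → IsFAP 𝒜 fun E => P E K) ∧
  ∀ E ∈ 𝒜, ∀ F ∈ 𝒜, ∀ K ∈ 𝒜, K.Nonempty → (E ∩ K).Nonempty →
    P (E ∩ F) K = P E K * P F (E ∩ K)

/-- `P` extends the prior `π` on `𝒜L` and the strategy `σ` on `𝒜 × ℒ`. -/
def ExtendsPriorStrategy {ι : Type*} (𝒜 𝒜L : Set (Set Ω)) (H : ι → Set Ω)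
    (π : Set Ω → ℝ) (σ : Set Ω → ι → ℝ) (P : Set Ω → Set Ω → ℝ) : Prop :=
  (∀ B ∈ 𝒜L, P B Set.univ = π B) ∧ ∀ F ∈ 𝒜, ∀ i, P F (H i) = σ F i

/-- The set `𝒫` of full conditional probabilities on `𝒜` extending `{π, σ}`. -/
def FCPSet {ι : Type*} (𝒜 𝒜L : Set (Set Ω)) (H : ι → Set Ω)
    (π : Set Ω → ℝ) (σ : Set Ω → ι → ℝ) : Set (Set Ω → Set Ω → ℝ) :=
  {P | IsFCP 𝒜 P ∧ ExtendsPriorStrategy 𝒜 𝒜L H π σ P}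

/-- Lower envelope of a set of conditional probabilities at `F|K`. -/
noncomputable def lowEnv (Ps : Set (Set Ω → Set Ω → ℝ)) (F K : Set Ω) : ℝ :=
  sInf ((fun P => P F K) '' Ps)

/-- Upper envelope of a set of conditional probabilities at `F|K`. -/
noncomputable def upEnv (Ps : Set (Set Ω → Set Ω → ℝ)) (F K : Set Ω) : ℝ :=
  sSup ((fun P => P F K) '' Ps)

/-- A finite partition of `Ω` contained in `𝒜L`. -/
def IsFinPart (𝒜L : Set (Set Ω)) (T : Finset (Set Ω)) : Prop :=
  (↑T : Set (Set Ω)) ⊆ 𝒜L ∧ (∀ A ∈ T, (A : Set Ω).Nonempty) ∧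
    (∀ A ∈ T, ∀ B ∈ T, A ≠ B → Disjoint A B) ∧ ⋃₀ (↑T : Set (Set Ω)) = Set.univ

/-- Lower Stieltjes integral of `X : ℒ → ℝ` with respect to `μ` on `𝒜L`. -/
noncomputable def lowerSInt {ι : Type*} (H : ι → Set Ω) (𝒜L : Set (Set Ω))
    (X : ι → ℝ) (μ : Set Ω → ℝ) : ℝ :=
  sSup {x | ∃ T : Finset (Set Ω), IsFinPart 𝒜L T ∧
    x = ∑ A ∈ T, sInf {y | ∃ i, H i ⊆ A ∧ y = X i} * μ A}

/-- Upper Stieltjes integral of `X : ℒ → ℝ` with respect to `μ` on `𝒜L`. -/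
noncomputable def upperSInt {ι : Type*} (H : ι → Set Ω) (𝒜L : Set (Set Ω))
    (X : ι → ℝ) (μ : Set Ω → ℝ) : ℝ :=
  sInf {x | ∃ T : Finset (Set Ω), IsFinPart 𝒜L T ∧
    x = ∑ A ∈ T, sSup {y | ∃ i, H i ⊆ A ∧ y = X i} * μ A}

/-- `𝒜L`-continuity of a bounded function `X : ℒ → ℝ`. -/
def ALContinuous {ι : Type*} (H : ι → Set Ω) (𝒜L : Set (Set Ω)) (X : ι → ℝ) : Prop :=
  (∃ M : ℝ, ∀ i, |X i| ≤ M) ∧ ∀ t : ℝ, ∀ ε > (0 : ℝ), ∃ A ∈ 𝒜L,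
    (⋃ i ∈ {i | t + ε ≤ X i}, H i) ⊆ A ∧ A ⊆ ⋃ i ∈ {i | t ≤ X i}, H i

/-- Countable additivity of `P` on the field `𝒜`. -/
def CountablyAdditiveOn (𝒜 : Set (Set Ω)) (P : Set Ω → ℝ) : Prop :=
  ∀ A : ℕ → Set Ω, (∀ n, A n ∈ 𝒜) → (Pairwise fun m n => Disjoint (A m) (A n)) →
    (⋃ n, A n) ∈ 𝒜 → HasSum (fun n => P (A n)) (P (⋃ n, A n))

/-- A (normalized) capacity on the field `𝒜`. -/
def IsCapacity (𝒜 : Set (Set Ω)) (φ : Set Ω → ℝ) : Prop :=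
  φ ∅ = 0 ∧ φ Set.univ = 1 ∧ (∀ A ∈ 𝒜, 0 ≤ φ A ∧ φ A ≤ 1) ∧
    ∀ A ∈ 𝒜, ∀ B ∈ 𝒜, A ⊆ B → φ A ≤ φ B

/-- Total monotonicity of a capacity `φ` on the field `𝒜`. -/
def TotallyMonotone (𝒜 : Set (Set Ω)) (φ : Set Ω → ℝ) : Prop :=
  ∀ n : ℕ, 2 ≤ n → ∀ A : Fin n → Set Ω, (∀ i, A i ∈ 𝒜) →
    ∑ s ∈ Finset.univ.powerset.filter (fun s : Finset (Fin n) => s.Nonempty),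
      (-1 : ℝ) ^ (s.card - 1) * φ (⋂ i ∈ s, A i) ≤ φ (⋃ i, A i)

/-- Restriction of a conditional probability to the domain `𝒜 × ℬ⁰`, viewed as a point
of the product space `ℝ^(𝒜 × ℬ⁰)`. -/
def restrictPairs (𝒜 ℬ : Set (Set Ω)) (Q : Set Ω → Set Ω → ℝ)
    (p : {p : Set Ω × Set Ω // p.1 ∈ 𝒜 ∧ p.2 ∈ ℬ ∧ p.2.Nonempty}) : ℝ :=
  Q p.val.1 p.val.2

/-- Restriction of a set function to the domain `𝒜`, viewed as a point of `ℝ^𝒜`. -/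
def restrictDom (𝒜 : Set (Set Ω)) (μ : Set Ω → ℝ) (A : {A : Set Ω // A ∈ 𝒜}) : ℝ :=
  μ A.val

/-- The field of all unions of members of the partition `H`, i.e. `⟨ℒ⟩*`. -/
def unionsOf {ι : Type*} (H : ι → Set Ω) : Set (Set Ω) :=
  {A | ∃ S : Set ι, A = ⋃ i ∈ S, H i}

/-- The set `𝒬^fd` of fully ℒ-disintegrable full conditional probabilities on `𝒜`
extending `{π, σ}`. -/
def QfdSet {ι : Type*} (𝒜 𝒜L : Set (Set Ω)) (H : ι → Set Ω)
    (π : Set Ω → ℝ) (σ : Set Ω → ι → ℝ) : Set (Set Ω → Set Ω → ℝ) :=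
  {Q | IsFCP 𝒜 Q ∧ ExtendsPriorStrategy 𝒜 𝒜L H π σ Q ∧
    ∀ F ∈ 𝒜, ∀ K ∈ 𝒜L, K.Nonempty →
      Q F K = lowerSInt H 𝒜L (fun i => σ F i) fun B => Q B K}

/-- The set `𝒬^fsc` of fully strongly ℒ-conglomerable full conditional probabilities
on `𝒜` extending `{π, σ}`. -/
def QfscSet {ι : Type*} (𝒜 𝒜L : Set (Set Ω)) (H : ι → Set Ω)
    (π : Set Ω → ℝ) (σ : Set Ω → ι → ℝ) : Set (Set Ω → Set Ω → ℝ) :=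
  {Q | IsFCP 𝒜 Q ∧ ExtendsPriorStrategy 𝒜 𝒜L H π σ Q ∧
    ∀ F ∈ 𝒜, ∀ K ∈ 𝒜L, K.Nonempty → ∀ B ∈ 𝒜L, B.Nonempty → B ⊆ K →
      Q B K * sInf {x | ∃ i, H i ⊆ B ∧ x = σ F i} ≤ Q (F ∩ B) K ∧
      Q (F ∩ B) K ≤ Q B K * sSup {x | ∃ i, H i ⊆ B ∧ x = σ F i}}

/-- The set `𝒫^sc` of strongly ℒ-conglomerable joint probabilities consistent with `{π, σ}`. -/
def PscSet {ι : Type*} (𝒜 𝒜L : Set (Set Ω)) (H : ι → Set Ω)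
    (π : Set Ω → ℝ) (σ : Set Ω → ι → ℝ) : Set (Set Ω → ℝ) :=
  {μ | (∃ P ∈ FCPSet 𝒜 𝒜L H π σ, μ = fun F => P F Set.univ) ∧
    ∀ F ∈ 𝒜, ∀ B ∈ 𝒜L, B.Nonempty →
      π B * sInf {x | ∃ i, H i ⊆ B ∧ x = σ F i} ≤ μ (F ∩ B) ∧
      μ (F ∩ B) ≤ π B * sSup {x | ∃ i, H i ⊆ B ∧ x = σ F i}}

/-- The set `𝒫^fd` of fully ℒ-disintegrable conditional probabilities on `𝒜 × 𝒜L⁰`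
extending `{π, σ}`. -/
def PfdSet {ι : Type*} (𝒜 𝒜L : Set (Set Ω)) (H : ι → Set Ω)
    (π : Set Ω → ℝ) (σ : Set Ω → ι → ℝ) : Set (Set Ω → Set Ω → ℝ) :=
  {P | (∀ E ∈ 𝒜, ∀ K ∈ 𝒜L, K.Nonempty → P E K = P (E ∩ K) K) ∧
    (∀ K ∈ 𝒜L, K.Nonempty → IsFAP 𝒜 fun E => P E K) ∧
    (∀ E ∈ 𝒜, ∀ F ∈ 𝒜, ∀ K ∈ 𝒜L, K.Nonempty → E ∩ K ∈ 𝒜L → (E ∩ K).Nonempty →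
      P (E ∩ F) K = P E K * P F (E ∩ K)) ∧
    (∀ B ∈ 𝒜L, P B Set.univ = π B) ∧ (∀ F ∈ 𝒜, ∀ i, P F (H i) = σ F i) ∧
    ∀ F ∈ 𝒜, ∀ K ∈ 𝒜L, K.Nonempty →
      P F K = lowerSInt H 𝒜L (fun i => σ F i) fun B => P B K}

/-- The Choquet integral `C∫ X dφ = ∫₀¹ φ₊((X ≥ t)) dt` of a `[0,1]`-valued `X : ℒ → ℝ`
with respect to a capacity `φ` on `𝒜L`, where `φ₊` is the inner extension of `φ`. -/
noncomputable def choquetInt {ι : Type*} (H : ι → Set Ω) (𝒜L : Set (Set Ω))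
    (X : ι → ℝ) (φ : Set Ω → ℝ) : ℝ :=
  ∫ t in (0 : ℝ)..(1 : ℝ),
    sSup {y | ∃ B ∈ 𝒜L, B ⊆ (⋃ i ∈ {i | t ≤ X i}, H i) ∧ y = φ B}

/-- `⟨𝒜⟩*`: the field of all unions of `𝒜`-atoms, i.e. the sets saturated for the
relation "belonging to exactly the same members of `𝒜`". -/
def atomUnions {Ω : Type*} (𝒜 : Set (Set Ω)) : Set (Set Ω) :=
  {F | ∀ x ∈ F, ∀ y, (∀ A ∈ 𝒜, (x ∈ A ↔ y ∈ A)) → y ∈ F}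

/-- The set of conditional probabilities on `⟨𝒜⟩* × 𝒜⁰` extending a full conditional
probability `P` on `𝒜`. -/
def condExtSet {Ω : Type*} (𝒜 : Set (Set Ω)) (P : Set Ω → Set Ω → ℝ) :
    Set (Set Ω → Set Ω → ℝ) :=
  {Q | (∀ F ∈ atomUnions 𝒜, ∀ K ∈ 𝒜, K.Nonempty → Q F K = Q (F ∩ K) K) ∧
    (∀ K ∈ 𝒜, K.Nonempty → IsFAP (atomUnions 𝒜) fun F => Q F K) ∧
    (∀ F ∈ atomUnions 𝒜, ∀ G ∈ atomUnions 𝒜, ∀ K ∈ 𝒜, K.Nonempty →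
      F ∩ K ∈ 𝒜 → (F ∩ K).Nonempty → Q (F ∩ G) K = Q F K * Q G (F ∩ K)) ∧
    ∀ F ∈ 𝒜, ∀ K ∈ 𝒜, K.Nonempty → Q F K = P F K}

open MeasureTheory

open scoped Pointwise

theorem IsSetField.isSetAlgebra {𝒜 : Set (Set Ω)} (h : IsSetField 𝒜) : IsSetAlgebra 𝒜 where
  empty_mem := by simpa using h.2.1 _ h.1
  compl_mem := h.2.1
  union_mem _ _ hs ht := h.2.2 _ hs _ ht

namespace IsFAP

variable {ℬ : Set (Set Ω)} {μ : Set Ω → ℝ}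

theorem nonneg (hμ : IsFAP ℬ μ) {A : Set Ω} (hA : A ∈ ℬ) : 0 ≤ μ A := (hμ.1 A hA).1

theorem le_one (hμ : IsFAP ℬ μ) {A : Set Ω} (hA : A ∈ ℬ) : μ A ≤ 1 := (hμ.1 A hA).2

theorem union (hμ : IsFAP ℬ μ) {A B : Set Ω} (hA : A ∈ ℬ) (hB : B ∈ ℬ) (hAB : Disjoint A B) :
    μ (A ∪ B) = μ A + μ B :=
  hμ.2.2 A hA B hB hAB

theorem anti {ℬ' : Set (Set Ω)} (hμ : IsFAP ℬ μ) (h : ℬ' ⊆ ℬ) : IsFAP ℬ' μ :=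
  ⟨fun A hA => hμ.1 A (h hA), hμ.2.1, fun A hA B hB => hμ.2.2 A (h hA) B (h hB)⟩

theorem empty (hℬ : IsSetField ℬ) (hμ : IsFAP ℬ μ) : μ ∅ = 0 := by
  have := hμ.union hℬ.isSetAlgebra.empty_mem hℬ.isSetAlgebra.empty_mem (disjoint_empty ∅)
  simpa using this

theorem inter_add_sdiff (hℬ : IsSetField ℬ) (hμ : IsFAP ℬ μ) {A B : Set Ω} (hA : A ∈ ℬ)
    (hB : B ∈ ℬ) : μ (A ∩ B) + μ (A \ B) = μ A := by
  rw [← hμ.union (hℬ.isSetAlgebra.inter_mem hA hB) (hℬ.isSetAlgebra.sdiff_mem hA hB)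
    disjoint_sdiff_inter.symm, inter_union_sdiff]

theorem sdiff (hℬ : IsSetField ℬ) (hμ : IsFAP ℬ μ) {A B : Set Ω} (hA : A ∈ ℬ) (hB : B ∈ ℬ)
    (hAB : A ⊆ B) : μ (B \ A) = μ B - μ A := by
  have := hμ.inter_add_sdiff hℬ hB hA
  rw [inter_eq_self_of_subset_right hAB] at this
  linarith

theorem mono (hℬ : IsSetField ℬ) (hμ : IsFAP ℬ μ) {A B : Set Ω} (hA : A ∈ ℬ) (hB : B ∈ ℬ)
    (hAB : A ⊆ B) : μ A ≤ μ B := by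
  linarith [hμ.sdiff hℬ hA hB hAB, hμ.nonneg (hℬ.isSetAlgebra.sdiff_mem hB hA)]

theorem biUnion (hℬ : IsSetField ℬ) (hμ : IsFAP ℬ μ) {ι : Type*} {S : Finset ι}
    {A : ι → Set Ω} (hA : ∀ i ∈ S, A i ∈ ℬ) (hd : (S : Set ι).PairwiseDisjoint A) :
    μ (⋃ i ∈ S, A i) = ∑ i ∈ S, μ (A i) :=
  addContent_biUnion_eq (m := hℬ.isSetAlgebra.isSetRing.addContent_of_union μ (hμ.empty hℬ)
    fun hs ht h => hμ.union hs ht h) hℬ.isSetAlgebra.isSetRing hA hd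

theorem inter (hℬ : IsSetField ℬ) (hμ : IsFAP ℬ μ) {K : Set Ω} (hK : K ∈ ℬ) (hK1 : μ K = 1) :
    IsFAP ℬ fun E => μ (E ∩ K) := by
  refine ⟨fun A hA => hμ.1 _ (hℬ.isSetAlgebra.inter_mem hA hK), by simpa using hK1, ?_⟩
  intro A hA B hB hAB
  simp only [union_inter_distrib_right]
  exact hμ.union (hℬ.isSetAlgebra.inter_mem hA hK) (hℬ.isSetAlgebra.inter_mem hB hK)
    (hAB.mono inter_subset_left inter_subset_left)

end IsFAP

noncomputable def innerMeasure (ℬ : Set (Set Ω)) (μ : Set Ω → ℝ) (S : Set Ω) : ℝ :=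
  sSup {x | ∃ B ∈ ℬ, B ⊆ S ∧ x = μ B}

noncomputable def outerMeasure (ℬ : Set (Set Ω)) (μ : Set Ω → ℝ) (S : Set Ω) : ℝ :=
  sInf {x | ∃ B ∈ ℬ, S ⊆ B ∧ x = μ B}

section InnerOuter

variable {ℬ : Set (Set Ω)} {μ : Set Ω → ℝ} {S T : Set Ω}

theorem le_innerMeasure (hμ : IsFAP ℬ μ) {C : Set Ω} (hC : C ∈ ℬ) (hCS : C ⊆ S) :
    μ C ≤ innerMeasure ℬ μ S :=
  le_csSup ⟨1, by rintro _ ⟨B, hB, -, rfl⟩; exact hμ.le_one hB⟩ ⟨C, hC, hCS, rfl⟩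

theorem innerMeasure_le (hℬ : IsSetField ℬ) {a : ℝ} (h : ∀ C ∈ ℬ, C ⊆ S → μ C ≤ a) :
    innerMeasure ℬ μ S ≤ a :=
  csSup_le ⟨_, ∅, hℬ.isSetAlgebra.empty_mem, empty_subset S, rfl⟩ (by
    rintro _ ⟨C, hC, hCS, rfl⟩; exact h C hC hCS)

theorem outerMeasure_le (hμ : IsFAP ℬ μ) {C : Set Ω} (hC : C ∈ ℬ) (hSC : S ⊆ C) :
    outerMeasure ℬ μ S ≤ μ C :=
  csInf_le ⟨0, by rintro _ ⟨B, hB, -, rfl⟩; exact hμ.nonneg hB⟩ ⟨C, hC, hSC, rfl⟩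

theorem le_outerMeasure (hℬ : IsSetField ℬ) {a : ℝ} (h : ∀ C ∈ ℬ, S ⊆ C → a ≤ μ C) :
    a ≤ outerMeasure ℬ μ S :=
  le_csInf ⟨_, univ, hℬ.1, subset_univ S, rfl⟩ (by
    rintro _ ⟨C, hC, hSC, rfl⟩; exact h C hC hSC)

theorem innerMeasure_of_mem (hℬ : IsSetField ℬ) (hμ : IsFAP ℬ μ)
    (hS : S ∈ ℬ) : innerMeasure ℬ μ S = μ S :=
  le_antisymm (innerMeasure_le hℬ fun _ hC hCS => hμ.mono hℬ hC hS hCS)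
    (le_innerMeasure hμ hS subset_rfl)

theorem innerMeasure_mono (hℬ : IsSetField ℬ) (hμ : IsFAP ℬ μ)
    (hST : S ⊆ T) : innerMeasure ℬ μ S ≤ innerMeasure ℬ μ T :=
  innerMeasure_le hℬ fun _ hC hCS => le_innerMeasure hμ hC (hCS.trans hST)

theorem innerMeasure_nonneg (hℬ : IsSetField ℬ) (hμ : IsFAP ℬ μ) :
    0 ≤ innerMeasure ℬ μ S := by
  simpa [hμ.empty hℬ] using le_innerMeasure hμ hℬ.isSetAlgebra.empty_mem (empty_subset S)

theorem innerMeasure_le_one (hℬ : IsSetField ℬ) (hμ : IsFAP ℬ μ) :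
    innerMeasure ℬ μ S ≤ 1 :=
  innerMeasure_le hℬ fun _ hC _ => hμ.le_one hC

theorem outerMeasure_nonneg (hℬ : IsSetField ℬ) (hμ : IsFAP ℬ μ) :
    0 ≤ outerMeasure ℬ μ S :=
  le_outerMeasure hℬ fun _ hC _ => hμ.nonneg hC

theorem outerMeasure_empty (hℬ : IsSetField ℬ) (hμ : IsFAP ℬ μ) :
    outerMeasure ℬ μ ∅ = 0 :=
  le_antisymm ((outerMeasure_le hμ hℬ.isSetAlgebra.empty_mem subset_rfl).trans_eq (hμ.empty hℬ))
    (outerMeasure_nonneg hℬ hμ)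

/-- `C ↦ B \ C` exchanges the `ℬ`-sets inside `B ∩ S` with the `ℬ`-sets covering `B \ S`. -/
theorem outerMeasure_sdiff (hℬ : IsSetField ℬ) (hμ : IsFAP ℬ μ)
    {B : Set Ω} (hB : B ∈ ℬ) (S : Set Ω) :
    outerMeasure ℬ μ (B \ S) = μ B - innerMeasure ℬ μ (B ∩ S) := by
  have h𝒜 := hℬ.isSetAlgebra
  refine le_antisymm ?_ ?_
  · suffices innerMeasure ℬ μ (B ∩ S) ≤ μ B - outerMeasure ℬ μ (B \ S) by linarith
    refine innerMeasure_le hℬ fun C hC hCS => ?_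
    have hCB : C ⊆ B := hCS.trans inter_subset_left
    have : outerMeasure ℬ μ (B \ S) ≤ μ (B \ C) :=
      outerMeasure_le hμ (h𝒜.sdiff_mem hB hC) (sdiff_subset_sdiff_right
        (hCS.trans inter_subset_right))
    linarith [hμ.sdiff hℬ hC hB hCB]
  · refine le_outerMeasure hℬ fun C hC hSC => ?_
    have : μ (B \ C) ≤ innerMeasure ℬ μ (B ∩ S) :=
      le_innerMeasure hμ (h𝒜.sdiff_mem hB hC) fun x ⟨hxB, hxC⟩ =>
        ⟨hxB, by_contra fun hxS => hxC (hSC ⟨hxB, hxS⟩)⟩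
    linarith [hμ.inter_add_sdiff hℬ hB hC, hμ.mono hℬ (h𝒜.inter_mem hB hC) hC inter_subset_right]

theorem innerMeasure_union (hℬ : IsSetField ℬ) (hμ : IsFAP ℬ μ)
    {B S₁ S₂ : Set Ω} (hB : B ∈ ℬ) (h₁ : S₁ ⊆ B) (h₂ : Disjoint S₂ B) :
    innerMeasure ℬ μ (S₁ ∪ S₂) = innerMeasure ℬ μ S₁ + innerMeasure ℬ μ S₂ := by
  have h𝒜 := hℬ.isSetAlgebra
  refine le_antisymm (innerMeasure_le hℬ fun C hC hCS => ?_) ?_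
  · rw [← hμ.inter_add_sdiff hℬ hC hB]
    refine add_le_add (le_innerMeasure hμ (h𝒜.inter_mem hC hB) ?_)
      (le_innerMeasure hμ (h𝒜.sdiff_mem hC hB) ?_)
    · exact fun x ⟨hxC, hxB⟩ => (hCS hxC).resolve_right fun hx => h₂.ne_of_mem hx hxB rfl
    · exact fun x ⟨hxC, hxB⟩ => (hCS hxC).resolve_left fun hx => hxB (h₁ hx)
  · suffices ∀ C₁ ∈ ℬ, C₁ ⊆ S₁ → ∀ C₂ ∈ ℬ, C₂ ⊆ S₂ → μ C₁ + μ C₂ ≤ innerMeasure ℬ μ (S₁ ∪ S₂) by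
      have key : innerMeasure ℬ μ S₁ ≤ innerMeasure ℬ μ (S₁ ∪ S₂) - innerMeasure ℬ μ S₂ :=
        innerMeasure_le hℬ fun C₁ hC₁ hC₁S => by
          have : innerMeasure ℬ μ S₂ ≤ innerMeasure ℬ μ (S₁ ∪ S₂) - μ C₁ :=
            innerMeasure_le hℬ fun C₂ hC₂ hC₂S => by linarith [this C₁ hC₁ hC₁S C₂ hC₂ hC₂S]
          linarith
      linarith
    intro C₁ hC₁ hC₁S C₂ hC₂ hC₂S
    rw [← hμ.union hC₁ hC₂ ((h₂.mono hC₂S (hC₁S.trans h₁)).symm)]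
    exact le_innerMeasure hμ (h𝒜.union_mem hC₁ hC₂) (union_subset_union hC₁S hC₂S)

theorem outerMeasure_union (hℬ : IsSetField ℬ) (hμ : IsFAP ℬ μ)
    {B S₁ S₂ : Set Ω} (hB : B ∈ ℬ) (h₁ : S₁ ⊆ B) (h₂ : Disjoint S₂ B) :
    outerMeasure ℬ μ (S₁ ∪ S₂) = outerMeasure ℬ μ S₁ + outerMeasure ℬ μ S₂ := by
  have h𝒜 := hℬ.isSetAlgebra
  refine le_antisymm ?_ (le_outerMeasure hℬ fun C hC hSC => ?_)
  · suffices ∀ C₁ ∈ ℬ, S₁ ⊆ C₁ → ∀ C₂ ∈ ℬ, S₂ ⊆ C₂ → outerMeasure ℬ μ (S₁ ∪ S₂) ≤ μ C₁ + μ C₂ by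
      have key : outerMeasure ℬ μ (S₁ ∪ S₂) - outerMeasure ℬ μ S₂ ≤ outerMeasure ℬ μ S₁ :=
        le_outerMeasure hℬ fun C₁ hC₁ hSC₁ => by
          have : outerMeasure ℬ μ (S₁ ∪ S₂) - μ C₁ ≤ outerMeasure ℬ μ S₂ :=
            le_outerMeasure hℬ fun C₂ hC₂ hSC₂ => by linarith [this C₁ hC₁ hSC₁ C₂ hC₂ hSC₂]
          linarith
      linarith
    intro C₁ hC₁ hSC₁ C₂ hC₂ hSC₂
    have hsub : S₁ ∪ S₂ ⊆ (C₁ ∩ B) ∪ (C₂ \ B) :=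
      union_subset (fun x hx => Or.inl ⟨hSC₁ hx, h₁ hx⟩)
        (fun x hx => Or.inr ⟨hSC₂ hx, fun hxB => h₂.ne_of_mem hx hxB rfl⟩)
    calc outerMeasure ℬ μ (S₁ ∪ S₂) ≤ μ ((C₁ ∩ B) ∪ (C₂ \ B)) :=
          outerMeasure_le hμ (h𝒜.union_mem (h𝒜.inter_mem hC₁ hB) (h𝒜.sdiff_mem hC₂ hB)) hsub
      _ = μ (C₁ ∩ B) + μ (C₂ \ B) := hμ.union (h𝒜.inter_mem hC₁ hB) (h𝒜.sdiff_mem hC₂ hB)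
          (disjoint_sdiff_right.mono_left inter_subset_right)
      _ ≤ μ C₁ + μ C₂ := add_le_add
          (hμ.mono hℬ (h𝒜.inter_mem hC₁ hB) hC₁ inter_subset_left)
          (hμ.mono hℬ (h𝒜.sdiff_mem hC₂ hB) hC₂ sdiff_subset)
  · rw [← hμ.inter_add_sdiff hℬ hC hB]
    exact add_le_add
      (outerMeasure_le hμ (h𝒜.inter_mem hC hB) fun x hx => ⟨hSC (Or.inl hx), h₁ hx⟩)
      (outerMeasure_le hμ (h𝒜.sdiff_mem hC hB) fun x hx =>
        ⟨hSC (Or.inr hx), fun hxB => h₂.ne_of_mem hx hxB rfl⟩)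

theorem innerMeasure_eq_mul (hμ : IsFAP ℬ μ)
    {ν : Set Ω → ℝ} {D : Set Ω} (hD : D ∈ ℬ)
    (hμν : ∀ C ∈ ℬ, C ⊆ D → μ C = μ D * ν C) (hSD : S ⊆ D) :
    innerMeasure ℬ μ S = μ D * innerMeasure ℬ ν S := by
  have : {x | ∃ C ∈ ℬ, C ⊆ S ∧ x = μ C} = μ D • {x | ∃ C ∈ ℬ, C ⊆ S ∧ x = ν C} := by
    ext x
    simp only [mem_smul_set, mem_ofPred_eq, smul_eq_mul]
    constructor
    · rintro ⟨C, hC, hCS, rfl⟩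
      exact ⟨ν C, ⟨C, hC, hCS, rfl⟩, (hμν C hC (hCS.trans hSD)).symm⟩
    · rintro ⟨_, ⟨C, hC, hCS, rfl⟩, rfl⟩
      exact ⟨C, hC, hCS, (hμν C hC (hCS.trans hSD)).symm⟩
  rw [innerMeasure, this, Real.sSup_smul_of_nonneg (hμ.nonneg hD), smul_eq_mul, innerMeasure]

theorem innerMeasure_inter (hℬ : IsSetField ℬ) (hμ : IsFAP ℬ μ)
    {K : Set Ω} (hK : K ∈ ℬ) (hμK : ∀ C ∈ ℬ, μ (C ∩ K) = μ C) :
    innerMeasure ℬ μ (S ∩ K) = innerMeasure ℬ μ S :=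
  le_antisymm (innerMeasure_mono hℬ hμ inter_subset_left) (innerMeasure_le hℬ fun C hC hCS =>
    hμK C hC ▸ le_innerMeasure hμ (hℬ.isSetAlgebra.inter_mem hC hK) (inter_subset_inter_left K hCS))

end InnerOuter

theorem IsFAP.inclusion_exclusion {ℬ : Set (Set Ω)} {μ : Set Ω → ℝ} (hℬ : IsSetField ℬ)
    (hμ : IsFAP ℬ μ) {n : ℕ} {A : Fin n → Set Ω} (hA : ∀ i, A i ∈ ℬ) :
    ∑ s ∈ Finset.univ.powerset.filter (fun s : Finset (Fin n) => s.Nonempty),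
      (-1 : ℝ) ^ (s.card - 1) * μ (⋂ i ∈ s, A i) = μ (⋃ i, A i) := by
  classical
  let pattern : Ω → Finset (Fin n) := fun x => Finset.univ.filter (x ∈ A ·)
  have hcell (S : Finset (Fin n)) : pattern ⁻¹' {S} ∈ ℬ := by
    have : pattern ⁻¹' {S} = ⋂ i ∈ (Finset.univ : Finset (Fin n)),
        if i ∈ S then A i else (A i)ᶜ := by
      ext x
      simp only [mem_preimage, mem_singleton_iff, Finset.ext_iff, pattern]
      simp only [Finset.mem_filter, Finset.mem_univ, true_and, mem_iInter]
      refine forall_congr' fun i => ?_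
      by_cases hi : i ∈ S <;> simp [hi]
    rw [this]
    exact hℬ.isSetAlgebra.biInter_mem _ fun i _ => by
      split_ifs
      exacts [hA i, hℬ.2.1 _ (hA i)]
  have hμU (U : Finset (Finset (Fin n))) : μ (pattern ⁻¹' U) = ∑ S ∈ U, μ (pattern ⁻¹' {S}) := by
    rw [← hμ.biUnion hℬ (fun S _ => hcell S) (pairwiseDisjoint_fiber pattern _)]
    congr 1
    ext x
    simp
  let T : Fin n → Finset (Finset (Fin n)) := fun i => Finset.univ.filter (i ∈ ·)
  have hI (s : Finset (Fin n)) (hs : s.Nonempty) : ⋂ i ∈ s, A i = pattern ⁻¹' ↑(s.inf' hs T) := by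
    ext x
    simp [pattern, T]
  have hU : ⋃ i, A i = pattern ⁻¹' ↑(Finset.univ.biUnion T) := by
    ext x
    simp [pattern, T]
  rw [hU, hμU, Finset.inclusion_exclusion_sum_biUnion, ← Finset.sum_coe_sort]
  refine Finset.sum_congr rfl fun t _ => ?_
  obtain ⟨k, hk⟩ := Nat.exists_eq_add_of_lt (Finset.card_pos.2 (Finset.mem_filter.1 t.2).2)
  rw [← hμU, ← hI, zsmul_eq_mul, hk]
  simp [pow_succ]

theorem exists_lt_of_lt_innerMeasure {ℬ : Set (Set Ω)} {μ : Set Ω → ℝ} (hℬ : IsSetField ℬ)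
    {S : Set Ω} {a : ℝ} (ha : a < innerMeasure ℬ μ S) : ∃ C ∈ ℬ, C ⊆ S ∧ a < μ C := by
  obtain ⟨_, ⟨C, hC, hCS, rfl⟩, hlt⟩ :=
    exists_lt_of_lt_csSup (s := {x | ∃ B ∈ ℬ, B ⊆ S ∧ x = μ B})
      ⟨_, ∅, hℬ.isSetAlgebra.empty_mem, empty_subset S, rfl⟩ ha
  exact ⟨C, hC, hCS, hlt⟩

theorem exists_approx_iInter_innerMeasure {ℬ : Set (Set Ω)} {μ : Set Ω → ℝ}
    (hℬ : IsSetField ℬ) (hμ : IsFAP ℬ μ) {n : ℕ} (A : Fin n → Set Ω) {δ : ℝ} (hδ : 0 < δ) :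
    ∃ E : Fin n → Set Ω, (∀ i, E i ∈ ℬ ∧ E i ⊆ A i) ∧
      ∀ s : Finset (Fin n), innerMeasure ℬ μ (⋂ i ∈ s, A i) < μ (⋂ i ∈ s, E i) + δ := by
  have h𝒜 := hℬ.isSetAlgebra
  choose D hD hDA hμD using fun s : Finset (Fin n) =>
    exists_lt_of_lt_innerMeasure hℬ (sub_lt_self (innerMeasure ℬ μ (⋂ i ∈ s, A i)) hδ)
  let E : Fin n → Set Ω := fun i => ⋃ s ∈ Finset.univ.filter (i ∈ ·), D s
  have hEmem (i : Fin n) : E i ∈ ℬ := h𝒜.biUnion_mem _ fun s _ => hD s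
  have hEA (i : Fin n) : E i ⊆ A i :=
    iUnion₂_subset fun s hs => (hDA s).trans (biInter_subset_of_mem (Finset.mem_filter.1 hs).2)
  have hDE (s : Finset (Fin n)) : D s ⊆ ⋂ i ∈ s, E i :=
    subset_iInter₂ fun i hi => subset_biUnion_of_mem (u := D) (by simpa using hi)
  refine ⟨E, fun i => ⟨hEmem i, hEA i⟩, fun s => ?_⟩
  have := hμ.mono hℬ (hD s) (h𝒜.biInter_mem s fun i _ => hEmem i) (hDE s)
  linarith [hμD s]

theorem totallyMonotone_innerMeasure {ℬ : Set (Set Ω)} {μ : Set Ω → ℝ} (hℬ : IsSetField ℬ)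
    (hμ : IsFAP ℬ μ) (𝒜' : Set (Set Ω)) : TotallyMonotone 𝒜' (innerMeasure ℬ μ) := by
  intro n _ A _
  set 𝒮 := Finset.univ.powerset.filter (fun s : Finset (Fin n) => s.Nonempty)
  have h𝒜 := hℬ.isSetAlgebra
  refine le_of_forall_pos_le_add fun ε hε => ?_
  set δ := ε / (𝒮.card + 1)
  obtain ⟨E, hE, hEA⟩ := exists_approx_iInter_innerMeasure hℬ hμ A (δ := δ) (by positivity)
  have hEmem (s : Finset (Fin n)) : ⋂ i ∈ s, E i ∈ ℬ := h𝒜.biInter_mem s fun i _ => (hE i).1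
  have hterm : ∀ s ∈ 𝒮, (-1 : ℝ) ^ (s.card - 1) * innerMeasure ℬ μ (⋂ i ∈ s, A i) ≤
      (-1 : ℝ) ^ (s.card - 1) * μ (⋂ i ∈ s, E i) + δ := by
    intro s _
    have := le_innerMeasure hμ (hEmem s) (iInter₂_mono fun i _ => (hE i).2)
    rcases neg_one_pow_eq_or ℝ (s.card - 1) with h | h <;> rw [h] <;> linarith [hEA s]
  have hδ : (𝒮.card : ℝ) * δ ≤ ε := by
    rw [mul_div_assoc', div_le_iff₀ (by positivity)]
    nlinarith
  calc _ ≤ ∑ s ∈ 𝒮, ((-1 : ℝ) ^ (s.card - 1) * μ (⋂ i ∈ s, E i) + δ) := Finset.sum_le_sum hterm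
    _ = μ (⋃ i, E i) + 𝒮.card * δ := by
      rw [Finset.sum_add_distrib, hμ.inclusion_exclusion hℬ fun i => (hE i).1]
      simp
    _ ≤ innerMeasure ℬ μ (⋃ i, A i) + ε := by
      refine add_le_add (le_innerMeasure hμ ?_ (iUnion_mono fun i => (hE i).2)) hδ
      simpa using h𝒜.biUnion_mem Finset.univ fun i _ => (hE i).1

theorem isCapacity_innerMeasure {ℬ : Set (Set Ω)} {μ : Set Ω → ℝ} (hℬ : IsSetField ℬ)
    (hμ : IsFAP ℬ μ) (𝒜' : Set (Set Ω)) : IsCapacity 𝒜' (innerMeasure ℬ μ) :=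
  ⟨(innerMeasure_of_mem hℬ hμ hℬ.isSetAlgebra.empty_mem).trans (hμ.empty hℬ),
    (innerMeasure_of_mem hℬ hμ hℬ.1).trans hμ.2.1,
    fun _ _ => ⟨innerMeasure_nonneg hℬ hμ, innerMeasure_le_one hℬ hμ⟩,
    fun _ _ _ _ hAB => innerMeasure_mono hℬ hμ hAB⟩

theorem IsCapacity.congr {𝒜' : Set (Set Ω)} {φ ψ : Set Ω → ℝ} (hφ : IsCapacity 𝒜' φ)
    (h𝒜' : IsSetField 𝒜') (h : ∀ A ∈ 𝒜', φ A = ψ A) : IsCapacity 𝒜' ψ := by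
  obtain ⟨h0, h1, hbd, hmono⟩ := hφ
  refine ⟨h ∅ h𝒜'.isSetAlgebra.empty_mem ▸ h0, h univ h𝒜'.1 ▸ h1, fun A hA => h A hA ▸ hbd A hA,
    fun A hA B hB hAB => ?_⟩
  rw [← h A hA, ← h B hB]
  exact hmono A hA B hB hAB

theorem TotallyMonotone.congr {𝒜' : Set (Set Ω)} {φ ψ : Set Ω → ℝ} (hφ : TotallyMonotone 𝒜' φ)
    (h𝒜' : IsSetField 𝒜') (h : ∀ A ∈ 𝒜', φ A = ψ A) : TotallyMonotone 𝒜' ψ := by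
  intro n hn A hA
  have hU : ⋃ i, A i ∈ 𝒜' := by
    simpa using h𝒜'.isSetAlgebra.biUnion_mem Finset.univ fun i _ => hA i
  rw [← h _ hU]
  convert hφ n hn A hA using 2 with s
  rw [h _ (h𝒜'.isSetAlgebra.biInter_mem s fun i _ => hA i)]

def adjoinField (ℬ : Set (Set Ω)) (F : Set Ω) : Set (Set Ω) :=
  {E | ∃ B₁ ∈ ℬ, ∃ B₂ ∈ ℬ, E = B₁ ∩ F ∪ B₂ \ F}

/-- The Łoś–Marczewski extension of `μ` from `ℬ` to `adjoinField ℬ F`. -/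
noncomputable def adjoinExtension (ℬ : Set (Set Ω)) (μ : Set Ω → ℝ) (F E : Set Ω) : ℝ :=
  innerMeasure ℬ μ (E ∩ F) + outerMeasure ℬ μ (E \ F)

section Adjoin

variable {ℬ : Set (Set Ω)} {μ : Set Ω → ℝ} {F E : Set Ω}

theorem subset_adjoinField : ℬ ⊆ adjoinField ℬ F :=
  fun B hB => ⟨B, hB, B, hB, (inter_union_sdiff B F).symm⟩

theorem mem_adjoinField_self (hℬ : IsSetField ℬ) : F ∈ adjoinField ℬ F :=
  ⟨univ, hℬ.1, ∅, hℬ.isSetAlgebra.empty_mem, by simp⟩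

theorem isSetField_adjoinField (hℬ : IsSetField ℬ) : IsSetField (adjoinField ℬ F) := by
  refine ⟨subset_adjoinField hℬ.1, ?_, ?_⟩
  · rintro _ ⟨B₁, hB₁, B₂, hB₂, rfl⟩
    refine ⟨B₁ᶜ, hℬ.2.1 _ hB₁, B₂ᶜ, hℬ.2.1 _ hB₂, ?_⟩
    ext x
    by_cases hx : x ∈ F <;> simp [hx]
  · rintro _ ⟨B₁, hB₁, B₂, hB₂, rfl⟩ _ ⟨C₁, hC₁, C₂, hC₂, rfl⟩
    refine ⟨B₁ ∪ C₁, hℬ.2.2 _ hB₁ _ hC₁, B₂ ∪ C₂, hℬ.2.2 _ hB₂ _ hC₂, ?_⟩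
    ext x
    by_cases hx : x ∈ F <;> simp [hx]

theorem exists_of_mem_adjoinField (hE : E ∈ adjoinField ℬ F) :
    ∃ B₁ ∈ ℬ, ∃ B₂ ∈ ℬ, E ∩ F = B₁ ∩ F ∧ E \ F = B₂ \ F := by
  obtain ⟨B₁, hB₁, B₂, hB₂, rfl⟩ := hE
  refine ⟨B₁, hB₁, B₂, hB₂, ?_, ?_⟩ <;> ext x <;> by_cases hx : x ∈ F <;> simp [hx]

theorem adjoinExtension_of_mem (hℬ : IsSetField ℬ) (hμ : IsFAP ℬ μ) {B : Set Ω} (hB : B ∈ ℬ) :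
    adjoinExtension ℬ μ F B = μ B := by
  rw [adjoinExtension, outerMeasure_sdiff hℬ hμ hB]
  ring

theorem adjoinExtension_union (hℬ : IsSetField ℬ) (hμ : IsFAP ℬ μ) {E₁ E₂ : Set Ω}
    (hE₁ : E₁ ∈ adjoinField ℬ F) (hd : Disjoint E₁ E₂) :
    adjoinExtension ℬ μ F (E₁ ∪ E₂) = adjoinExtension ℬ μ F E₁ + adjoinExtension ℬ μ F E₂ := by
  obtain ⟨B₁, hB₁, B₂, hB₂, h₁, h₂⟩ := exists_of_mem_adjoinField hE₁
  have hinner := innerMeasure_union hℬ hμ (S₂ := E₂ ∩ F) hB₁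
      (h₁.trans_subset inter_subset_left) <| by
    rw [disjoint_left]
    intro x hx hxB
    have : x ∈ E₁ ∩ F := h₁ ▸ ⟨hxB, hx.2⟩
    exact hd.ne_of_mem this.1 hx.1 rfl
  have houter := outerMeasure_union hℬ hμ (S₂ := E₂ \ F) hB₂
      (h₂.trans_subset sdiff_subset) <| by
    rw [disjoint_left]
    intro x hx hxB
    have : x ∈ E₁ \ F := h₂ ▸ ⟨hxB, hx.2⟩
    exact hd.ne_of_mem this.1 hx.1 rfl
  rw [adjoinExtension, union_inter_distrib_right, union_sdiff_distrib, hinner, houter,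
    adjoinExtension, adjoinExtension]
  ring

theorem isFAP_adjoinExtension (hℬ : IsSetField ℬ) (hμ : IsFAP ℬ μ) :
    IsFAP (adjoinField ℬ F) (adjoinExtension ℬ μ F) := by
  have hnonneg (E : Set Ω) : 0 ≤ adjoinExtension ℬ μ F E :=
    add_nonneg (innerMeasure_nonneg hℬ hμ) (outerMeasure_nonneg hℬ hμ)
  have huniv : adjoinExtension ℬ μ F univ = 1 := (adjoinExtension_of_mem hℬ hμ hℬ.1).trans hμ.2.1
  refine ⟨fun E hE => ⟨hnonneg E, ?_⟩, huniv, fun E₁ hE₁ E₂ _ => adjoinExtension_union hℬ hμ hE₁⟩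
  have := adjoinExtension_union hℬ hμ hE (disjoint_compl_right (a := E))
  rw [union_compl_self, huniv] at this
  linarith [hnonneg Eᶜ]

theorem adjoinExtension_eq_mul (hℬ : IsSetField ℬ) (hμ : IsFAP ℬ μ) {ν : Set Ω → ℝ}
    (hν : IsFAP ℬ ν) {D : Set Ω} (hD : D ∈ ℬ) (hμν : ∀ C ∈ ℬ, C ⊆ D → μ C = μ D * ν C)
    (hE : E ∈ adjoinField ℬ F) (hED : E ⊆ D) :
    adjoinExtension ℬ μ F E = μ D * adjoinExtension ℬ ν F E := by
  obtain ⟨-, -, B, hB, -, hEB⟩ := exists_of_mem_adjoinField hE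
  have hBD : B ∩ D ∈ ℬ := hℬ.isSetAlgebra.inter_mem hB hD
  have hE' : E \ F = (B ∩ D) \ F := by
    ext x
    constructor
    · intro hx
      have hxB : x ∈ B \ F := hEB ▸ hx
      exact ⟨⟨hxB.1, hED hx.1⟩, hx.2⟩
    · rintro ⟨⟨hxB, -⟩, hxF⟩
      exact hEB ▸ ⟨hxB, hxF⟩
  have hinner {S : Set Ω} (hS : S ⊆ D) := innerMeasure_eq_mul hμ hD hμν hS (ν := ν)
  rw [adjoinExtension, adjoinExtension, hE', outerMeasure_sdiff hℬ hμ hBD,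
    outerMeasure_sdiff hℬ hν hBD, hinner (inter_subset_left.trans hED),
    hinner (inter_subset_left.trans inter_subset_right), hμν _ hBD inter_subset_right]
  ring

end Adjoin

/-- (C1)–(C3) for `Q` on `ℬ × 𝒦⁰`. -/
structure IsCondProbOn (ℬ 𝒦 : Set (Set Ω)) (Q : Set Ω → Set Ω → ℝ) : Prop where
  inter_cond : ∀ E ∈ ℬ, ∀ K ∈ 𝒦, K.Nonempty → Q E K = Q (E ∩ K) K
  isFAP : ∀ K ∈ 𝒦, K.Nonempty → IsFAP ℬ fun E => Q E K
  mul_cond : ∀ E ∈ ℬ, ∀ G ∈ ℬ, ∀ K ∈ 𝒦, K.Nonempty → E ∩ K ∈ 𝒦 → (E ∩ K).Nonempty →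
    Q (E ∩ G) K = Q E K * Q G (E ∩ K)

theorem IsFCP.isCondProbOn {𝒜 : Set (Set Ω)} {P : Set Ω → Set Ω → ℝ} (hP : IsFCP 𝒜 P) :
    IsCondProbOn 𝒜 𝒜 P :=
  ⟨hP.1, hP.2.1, fun E hE G hG K hK hKne _ => hP.2.2 E hE G hG K hK hKne⟩

noncomputable def condAdjoinExtension (ℬ : Set (Set Ω)) (Q : Set Ω → Set Ω → ℝ) (F : Set Ω) :
    Set Ω → Set Ω → ℝ :=
  fun E K => adjoinExtension ℬ (Q · K) F (E ∩ K)

namespace IsCondProbOn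

variable {ℬ 𝒦 : Set (Set Ω)} {Q Q' : Set Ω → Set Ω → ℝ}

theorem anti {ℬ' : Set (Set Ω)} (hQ : IsCondProbOn ℬ 𝒦 Q) (h : ℬ' ⊆ ℬ) :
    IsCondProbOn ℬ' 𝒦 Q :=
  ⟨fun E hE => hQ.inter_cond E (h hE), fun K hK hKne => (hQ.isFAP K hK hKne).anti h,
    fun E hE G hG => hQ.mul_cond E (h hE) G (h hG)⟩

theorem condAdjoinExtension_of_mem (hℬ : IsSetField ℬ) (h𝒦 : 𝒦 ⊆ ℬ) (hQ : IsCondProbOn ℬ 𝒦 Q)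
    {F E K : Set Ω} (hE : E ∈ ℬ) (hK : K ∈ 𝒦) (hKne : K.Nonempty) :
    condAdjoinExtension ℬ Q F E K = Q E K :=
  (adjoinExtension_of_mem hℬ (hQ.isFAP K hK hKne)
    (hℬ.isSetAlgebra.inter_mem hE (h𝒦 hK))).trans (hQ.inter_cond E hE K hK hKne).symm

theorem adjoin (hℬ : IsSetField ℬ) (h𝒦 : 𝒦 ⊆ ℬ) (hQ : IsCondProbOn ℬ 𝒦 Q) (F : Set Ω) :
    IsCondProbOn (adjoinField ℬ F) 𝒦 (condAdjoinExtension ℬ Q F) := by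
  refine ⟨fun E _ K _ _ => by simp [condAdjoinExtension, inter_assoc], fun K hK hKne => ?_, ?_⟩
  · have hKK : adjoinExtension ℬ (Q · K) F K = 1 := by
      rw [adjoinExtension_of_mem hℬ (hQ.isFAP K hK hKne) (h𝒦 hK)]
      simpa using (hQ.inter_cond _ hℬ.1 K hK hKne).symm.trans (hQ.isFAP K hK hKne).2.1
    exact (isFAP_adjoinExtension hℬ (hQ.isFAP K hK hKne)).inter (isSetField_adjoinField hℬ)
      (subset_adjoinField (h𝒦 hK)) hKK
  intro E _ G hG K hK hKne hD hDne
  have hDK : E ∩ K ⊆ K := inter_subset_right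
  have hscale : ∀ C ∈ ℬ, C ⊆ E ∩ K → Q C K = Q (E ∩ K) K * Q C (E ∩ K) := by
    intro C hC hCD
    have := hQ.mul_cond _ (h𝒦 hD) C hC K hK hKne (by rwa [inter_eq_left.2 hDK]) (by
      rwa [inter_eq_left.2 hDK])
    rwa [inter_eq_right.2 hCD, inter_eq_left.2 hDK] at this
  have hGD : G ∩ (E ∩ K) ∈ adjoinField ℬ F :=
    (isSetField_adjoinField hℬ).isSetAlgebra.inter_mem hG (subset_adjoinField (h𝒦 hD))
  simp only [condAdjoinExtension]
  rw [show E ∩ G ∩ K = G ∩ (E ∩ K) by rw [inter_comm E G, inter_assoc],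
    adjoinExtension_eq_mul hℬ (hQ.isFAP K hK hKne) (hQ.isFAP _ hD hDne) (h𝒦 hD) hscale hGD
      inter_subset_right, adjoinExtension_of_mem hℬ (hQ.isFAP K hK hKne) (h𝒦 hD)]

theorem congr (hQ : IsCondProbOn ℬ 𝒦 Q) (hℬ : IsSetField ℬ) (h𝒦 : 𝒦 ⊆ ℬ)
    (h : ∀ E ∈ ℬ, ∀ K ∈ 𝒦, K.Nonempty → Q E K = Q' E K) : IsCondProbOn ℬ 𝒦 Q' := by
  have h𝒜 := hℬ.isSetAlgebra
  refine ⟨fun E hE K hK hKne => ?_, fun K hK hKne => ⟨fun A hA => ?_, ?_, fun A hA B hB hAB => ?_⟩,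
    fun E hE G hG K hK hKne hD hDne => ?_⟩
  · rw [← h E hE K hK hKne, ← h _ (h𝒜.inter_mem hE (h𝒦 hK)) K hK hKne]
    exact hQ.inter_cond E hE K hK hKne
  · simp only [← h A hA K hK hKne]
    exact (hQ.isFAP K hK hKne).1 A hA
  · simp only [← h univ hℬ.1 K hK hKne]
    exact (hQ.isFAP K hK hKne).2.1
  · simp only [← h _ (h𝒜.union_mem hA hB) K hK hKne, ← h A hA K hK hKne, ← h B hB K hK hKne]
    exact (hQ.isFAP K hK hKne).union hA hB hAB
  · rw [← h _ (h𝒜.inter_mem hE hG) K hK hKne, ← h E hE K hK hKne, ← h G hG _ hD hDne]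
    exact hQ.mul_cond E hE G hG K hK hKne hD hDne

/-- The conditions (C1)–(C3) each involve at most two events of `ℬ`. -/
theorem of_forall_pair (hne : ℬ.Nonempty)
    (h : ∀ E ∈ ℬ, ∀ G ∈ ℬ, ∃ ℬ', E ∈ ℬ' ∧ G ∈ ℬ' ∧ IsCondProbOn ℬ' 𝒦 Q) :
    IsCondProbOn ℬ 𝒦 Q := by
  refine ⟨fun E hE => ?_, fun K hK hKne => ⟨fun A hA => ?_, ?_, fun A hA B hB => ?_⟩,
    fun E hE G hG => ?_⟩
  · obtain ⟨ℬ', hE', -, hQ'⟩ := h E hE E hE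
    exact hQ'.inter_cond E hE'
  · obtain ⟨ℬ', hA', -, hQ'⟩ := h A hA A hA
    exact (hQ'.isFAP K hK hKne).1 A hA'
  · obtain ⟨A, hA⟩ := hne
    obtain ⟨ℬ', -, -, hQ'⟩ := h A hA A hA
    exact (hQ'.isFAP K hK hKne).2.1
  · obtain ⟨ℬ', hA', hB', hQ'⟩ := h A hA B hB
    exact (hQ'.isFAP K hK hKne).2.2 A hA' B hB'
  · obtain ⟨ℬ', hE', hG', hQ'⟩ := h E hE G hG
    exact hQ'.mul_cond E hE' G hG'

end IsCondProbOn

structure PartialCondProb (𝒦 : Set (Set Ω)) where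
  dom : Set (Set Ω)
  prob : Set Ω → Set Ω → ℝ
  isSetField_dom : IsSetField dom
  subset_dom : 𝒦 ⊆ dom
  isCondProbOn : IsCondProbOn dom 𝒦 prob

namespace PartialCondProb

variable {𝒦 : Set (Set Ω)}

instance : Preorder (PartialCondProb 𝒦) where
  le p q := p.dom ⊆ q.dom ∧ ∀ E ∈ p.dom, ∀ K ∈ 𝒦, K.Nonempty → p.prob E K = q.prob E K
  le_refl _ := ⟨subset_rfl, fun _ _ _ _ _ => rfl⟩
  le_trans _ _ _ hpq hqr := ⟨hpq.1.trans hqr.1, fun E hE K hK hKne =>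
    (hpq.2 E hE K hK hKne).trans (hqr.2 E (hpq.1 hE) K hK hKne)⟩

theorem exists_mem_dom_of_isChain {c : Set (PartialCondProb 𝒦)} (hc : IsChain (· ≤ ·) c)
    {E G : Set Ω} (hE : E ∈ ⋃ p ∈ c, p.dom) (hG : G ∈ ⋃ p ∈ c, p.dom) :
    ∃ p ∈ c, E ∈ p.dom ∧ G ∈ p.dom := by
  simp only [mem_iUnion₂] at hE hG
  obtain ⟨p, hp, hEp⟩ := hE
  obtain ⟨q, hq, hGq⟩ := hG
  obtain ⟨r, hr, hpr, hqr⟩ := hc.directedOn p hp q hq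
  exact ⟨r, hr, hpr.1 hEp, hqr.1 hGq⟩

theorem bddAbove_of_isChain {c : Set (PartialCondProb 𝒦)} (hc : IsChain (· ≤ ·) c)
    (hne : c.Nonempty) : BddAbove c := by
  set dom := ⋃ p ∈ c, p.dom
  let prob : Set Ω → Set Ω → ℝ := fun E K =>
    if h : ∃ p ∈ c, E ∈ p.dom then h.choose.prob E K else 0
  have hprob : ∀ p ∈ c, ∀ E ∈ p.dom, ∀ K ∈ 𝒦, K.Nonempty → p.prob E K = prob E K := by
    intro p hp E hE K hK hKne
    have h : ∃ p ∈ c, E ∈ p.dom := ⟨p, hp, hE⟩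
    simp only [prob, dif_pos h]
    obtain ⟨hq, hEq⟩ := h.choose_spec
    rcases hc.total hp hq with hpq | hqp
    · exact hpq.2 E hE K hK hKne
    · exact (hqp.2 E hEq K hK hKne).symm
  obtain ⟨p₀, hp₀⟩ := hne
  have hsub : ∀ p ∈ c, p.dom ⊆ dom := fun p hp =>
    subset_biUnion_of_mem (u := PartialCondProb.dom) hp
  have hfield : IsSetField dom := by
    refine ⟨hsub p₀ hp₀ p₀.isSetField_dom.1, fun A hA => ?_, fun A hA B hB => ?_⟩
    · obtain ⟨p, hp, hAp, -⟩ := exists_mem_dom_of_isChain hc hA hA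
      exact hsub p hp (p.isSetField_dom.2.1 A hAp)
    · obtain ⟨p, hp, hAp, hBp⟩ := exists_mem_dom_of_isChain hc hA hB
      exact hsub p hp (p.isSetField_dom.2.2 A hAp B hBp)
  have hcond : IsCondProbOn dom 𝒦 prob := by
    refine .of_forall_pair ⟨univ, hfield.1⟩ fun E hE G hG => ?_
    obtain ⟨p, hp, hEp, hGp⟩ := exists_mem_dom_of_isChain hc hE hG
    exact ⟨p.dom, hEp, hGp, p.isCondProbOn.congr p.isSetField_dom p.subset_dom (hprob p hp)⟩
  exact ⟨⟨dom, prob, hfield, p₀.subset_dom.trans (hsub p₀ hp₀), hcond⟩,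
    fun p hp => ⟨hsub p hp, hprob p hp⟩⟩

noncomputable def adjoin (p : PartialCondProb 𝒦) (F : Set Ω) : PartialCondProb 𝒦 where
  dom := adjoinField p.dom F
  prob := condAdjoinExtension p.dom p.prob F
  isSetField_dom := isSetField_adjoinField p.isSetField_dom
  subset_dom := p.subset_dom.trans subset_adjoinField
  isCondProbOn := p.isCondProbOn.adjoin p.isSetField_dom p.subset_dom F

theorem le_adjoin (p : PartialCondProb 𝒦) (F : Set Ω) : p ≤ p.adjoin F :=
  ⟨subset_adjoinField, fun _ hE _ hK hKne => (p.isCondProbOn.condAdjoinExtension_of_mem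
    p.isSetField_dom p.subset_dom hE hK hKne).symm⟩

/-- Zorn's lemma, with `adjoin` ruling out a maximal element with a proper domain. -/
theorem exists_le_dom_eq_univ (p : PartialCondProb 𝒦) : ∃ q, p ≤ q ∧ q.dom = univ := by
  obtain ⟨m, hpm, hm⟩ := zorn_le_nonempty_Ici₀ p
    (fun c _ hc y hy => bddAbove_of_isChain hc ⟨y, hy⟩) p le_rfl
  exact ⟨m, hpm, eq_univ_of_forall fun F =>
    (hm (m.le_adjoin F)).1 (mem_adjoinField_self m.isSetField_dom)⟩

end PartialCondProb

theorem isSetField_atomUnions (𝒜 : Set (Set Ω)) : IsSetField (atomUnions 𝒜) :=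
  ⟨fun _ _ _ _ => trivial, fun _ hA x hx y hxy hy => hx (hA y hy x fun B hB => (hxy B hB).symm),
    fun _ hA _ hB x hx y hxy => hx.imp (hA x · y hxy) (hB x · y hxy)⟩

theorem subset_atomUnions (𝒜 : Set (Set Ω)) : 𝒜 ⊆ atomUnions 𝒜 :=
  fun _ hA _ hx _ hxy => (hxy _ hA).1 hx

section Envelope

variable {𝒜 : Set (Set Ω)} {P : Set Ω → Set Ω → ℝ}

theorem IsCondProbOn.mem_condExtSet {ℬ : Set (Set Ω)} {Q : Set Ω → Set Ω → ℝ}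
    (hQ : IsCondProbOn ℬ 𝒜 Q) (hℬ : atomUnions 𝒜 ⊆ ℬ)
    (hQP : ∀ E ∈ 𝒜, ∀ K ∈ 𝒜, K.Nonempty → Q E K = P E K) : Q ∈ condExtSet 𝒜 P :=
  have hQ' := hQ.anti hℬ
  ⟨hQ'.inter_cond, hQ'.isFAP, hQ'.mul_cond, hQP⟩

theorem exists_mem_condExtSet_eq_innerMeasure (h𝒜 : IsSetField 𝒜) (hP : IsFCP 𝒜 P)
    (F : Set Ω) :
    ∃ Q ∈ condExtSet 𝒜 P, ∀ K ∈ 𝒜, K.Nonempty → Q F K = innerMeasure 𝒜 (P · K) F := by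
  let p : PartialCondProb 𝒜 := ⟨𝒜, P, h𝒜, subset_rfl, hP.isCondProbOn⟩
  obtain ⟨q, hpq, hq⟩ := (p.adjoin F).exists_le_dom_eq_univ
  refine ⟨q.prob, q.isCondProbOn.mem_condExtSet (hq ▸ subset_univ _)
    fun E hE K hK hKne => (((p.le_adjoin F).trans hpq).2 E hE K hK hKne).symm,
    fun K hK hKne => ?_⟩
  rw [← hpq.2 F (mem_adjoinField_self h𝒜) K hK hKne]
  change adjoinExtension 𝒜 (P · K) F (F ∩ K) = _
  rw [adjoinExtension, inter_right_comm, inter_self, sdiff_eq_empty.2 inter_subset_left,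
    outerMeasure_empty h𝒜 (hP.2.1 K hK hKne), add_zero,
    innerMeasure_inter h𝒜 (hP.2.1 K hK hKne) hK fun C hC => (hP.1 C hC K hK hKne).symm]

theorem innerMeasure_le_of_mem_condExtSet (h𝒜 : IsSetField 𝒜) {Q : Set Ω → Set Ω → ℝ}
    (hQ : Q ∈ condExtSet 𝒜 P) {F K : Set Ω} (hF : F ∈ atomUnions 𝒜) (hK : K ∈ 𝒜)
    (hKne : K.Nonempty) : innerMeasure 𝒜 (P · K) F ≤ Q F K :=
  innerMeasure_le h𝒜 fun B hB hBF => hQ.2.2.2 B hB K hK hKne ▸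
    (hQ.2.1 K hK hKne).mono (isSetField_atomUnions 𝒜) (subset_atomUnions 𝒜 hB) hF hBF

theorem sInf_condExtSet_eq_innerMeasure (h𝒜 : IsSetField 𝒜) (hP : IsFCP 𝒜 P) {K : Set Ω}
    (hK : K ∈ 𝒜) (hKne : K.Nonempty) {F : Set Ω} (hF : F ∈ atomUnions 𝒜) :
    sInf ((fun Q => Q F K) '' condExtSet 𝒜 P) = innerMeasure 𝒜 (P · K) F := by
  obtain ⟨Q₀, hQ₀, hQ₀F⟩ := exists_mem_condExtSet_eq_innerMeasure h𝒜 hP F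
  have hlow : ∀ x ∈ (fun Q => Q F K) '' condExtSet 𝒜 P, innerMeasure 𝒜 (P · K) F ≤ x :=
    forall_mem_image.2 fun Q hQ => innerMeasure_le_of_mem_condExtSet h𝒜 hQ hF hK hKne
  exact le_antisymm ((csInf_le ⟨_, hlow⟩ (mem_image_of_mem _ hQ₀)).trans_eq (hQ₀F K hK hKne))
    (le_csInf (image_nonempty.2 ⟨Q₀, hQ₀⟩) hlow)

end Envelope

theorem statement18_general {Ω : Type*} (𝒜 : Set (Set Ω)) (h𝒜 : IsSetField 𝒜)
    (P : Set Ω → Set Ω → ℝ) (hP : IsFCP 𝒜 P) :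
    (condExtSet 𝒜 P).Nonempty ∧
    ∀ K ∈ 𝒜, K.Nonempty →
      (∀ F ∈ atomUnions 𝒜,
        sInf ((fun Q => Q F K) '' condExtSet 𝒜 P) =
          sSup {x | ∃ B ∈ 𝒜, B ⊆ F ∧ x = P B K}) ∧
      IsCapacity (atomUnions 𝒜) (fun F => sInf ((fun Q => Q F K) '' condExtSet 𝒜 P)) ∧
      TotallyMonotone (atomUnions 𝒜)
        (fun F => sInf ((fun Q => Q F K) '' condExtSet 𝒜 P)) := by
  obtain ⟨Q, hQ, -⟩ := exists_mem_condExtSet_eq_innerMeasure h𝒜 hP univ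
  refine ⟨⟨Q, hQ⟩, fun K hK hKne => ?_⟩
  have henv : ∀ F ∈ atomUnions 𝒜,
      innerMeasure 𝒜 (P · K) F = sInf ((fun Q => Q F K) '' condExtSet 𝒜 P) :=
    fun F hF => (sInf_condExtSet_eq_innerMeasure h𝒜 hP hK hKne hF).symm
  have hμ := hP.2.1 K hK hKne
  exact ⟨fun F hF => (henv F hF).symm,
    (isCapacity_innerMeasure h𝒜 hμ _).congr (isSetField_atomUnions 𝒜) henv,
    (totallyMonotone_innerMeasure h𝒜 hμ _).congr (isSetField_atomUnions 𝒜) henv⟩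

/-- the lower envelope of the extensions of a full conditional probability
`P` on `𝒜` to `⟨𝒜⟩* × 𝒜⁰` is, on each conditioning event, the inner measure induced by
`P(·|K)`, hence a totally monotone capacity on `⟨𝒜⟩*`. -/
theorem statement18 {Ω : Type*} [Nonempty Ω] (𝒜 : Set (Set Ω)) (h𝒜 : IsSetField 𝒜)
    (P : Set Ω → Set Ω → ℝ) (hP : IsFCP 𝒜 P) :
    (condExtSet 𝒜 P).Nonempty ∧
    ∀ K ∈ 𝒜, K.Nonempty →
      (∀ F ∈ atomUnions 𝒜,
        sInf ((fun Q => Q F K) '' condExtSet 𝒜 P) =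
          sSup {x | ∃ B ∈ 𝒜, B ⊆ F ∧ x = P B K}) ∧
      IsCapacity (atomUnions 𝒜) (fun F => sInf ((fun Q => Q F K) '' condExtSet 𝒜 P)) ∧
      TotallyMonotone (atomUnions 𝒜)
        (fun F => sInf ((fun Q => Q F K) '' condExtSet 𝒜 P)) :=
  statement18_general 𝒜 h𝒜 P hP
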